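/- The K-vector spaces C^1(R,K) and N^1(R,K) are K-Banach spaces with respect to the norm |f|_1 = sup_{r∈ℛ} |b_r(f)γ_r^{-1}|, where f = ∑_{r∈ℛ} b_r(f)χ_r is the wavelet expansion of f. -/

import Mathlib

open scoped ENNReal NNReal
open Filter Topology

noncomputable section

namespace DSW

variable {K : Type*} [NontriviallyNormedField K] [CompleteSpace K] [IsUltrametricDist K]

/-- The ring of integers `R = {x : K | ‖x‖ ≤ 1}`, as a subset of `K`. -/
def Rint (K : Type*) [NontriviallyNormedField K] : Set K := {x : K | ‖x‖ ≤ 1}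

/-- `∇ⁿR`: the set of tuples of pairwise distinct elements of `R`. -/
def nabla (K : Type*) [NontriviallyNormedField K] (n : ℕ) : Set (Fin n → K) :=
  {x | (∀ i, ‖x i‖ ≤ 1) ∧ Function.Injective x}

/-- The `n`-th difference quotient `Φₙ f`. -/
def Phi (f : K → K) : ∀ n : ℕ, (Fin (n + 1) → K) → K
  | 0, x => f (x 0)
  | n + 1, x =>
      (Phi f n (Fin.cons (x 0) fun i => x i.succ.succ) -
        Phi f n (Fin.cons (x 1) fun i => x i.succ.succ)) / (x 0 - x 1)

/-- `f` is a `Cⁿ`-function: `Φₙ f` extends to a continuous function on `R^(n+1)`. -/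
def IsCn (f : K → K) (n : ℕ) : Prop :=
  ∃ g : (Fin (n + 1) → K) → K,
    ContinuousOn g {x | ∀ i, ‖x i‖ ≤ 1} ∧
      ∀ x : Fin (n + 1) → K, (∀ i, ‖x i‖ ≤ 1) → Function.Injective x → g x = Phi f n x

/-- `Dₙ f a = Φₙ f (a, …, a)`, defined (for `n ≥ 1`) as the limit of `Φₙ f` at the
diagonal point `(a, …, a)`, and `D₀ f = f`. -/
def Dq (f : K → K) : ℕ → K → K
  | 0 => f
  | n + 1 => fun a =>
      limUnder (𝓝[{x : Fin (n + 2) → K | Function.Injective x}] fun _ => a) (Phi f (n + 1))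

/-- `ψⱼ f (x, y) = (f x − f y − ∑_{l=1}^{j} (x−y)^l Dₗf y) / (x−y)^(j+1)`. -/
def psi (f : K → K) (j : ℕ) (x y : K) : K :=
  (f x - f y - ∑ l ∈ Finset.Icc 1 j, (x - y) ^ l * Dq f l y) / (x - y) ^ (j + 1)

variable (π : K) (𝒯 : Set K)

/-- `ℛₘ`: the set of sums `∑_{i<m} aᵢ πⁱ` with digits in `𝒯`. -/
def Rm (m : ℕ) : Set K :=
  {x | ∃ a : Fin m → K, (∀ i, a i ∈ 𝒯) ∧ x = ∑ i, a i * π ^ (i : ℕ)}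

/-- `ℛ = ⋃ₘ ℛₘ`. -/
def RR : Set K := ⋃ m, Rm π 𝒯 m

/-- `ℛ₊ = ℛ \ {0}`. -/
def RPlus : Set K := RR π 𝒯 \ {0}

/-- The length `l(r)`: the least `m` with `r ∈ ℛₘ`. -/
def len (r : K) : ℕ := sInf {m | r ∈ Rm π 𝒯 m}

/-- `χ_r`: characteristic function of the disk `{x : ‖x − r‖ ≤ ‖π‖^(l r)}`. -/
def chi (r x : K) : K := if ‖x - r‖ ≤ ‖π‖ ^ len π 𝒯 r then 1 else 0

/-- The truncation `x_m`: the unique element of `ℛₘ` with `‖x − x_m‖ ≤ ‖π‖^m`. -/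
def trunc (x : K) (m : ℕ) : K :=
  Classical.epsilon fun s => s ∈ Rm π 𝒯 m ∧ ‖x - s‖ ≤ ‖π‖ ^ m

/-- `r₋`: the truncation of `r` dropping the top digit. -/
def rminus (r : K) : K := trunc π 𝒯 r (len π 𝒯 r - 1)

open Classical in
/-- `γ_r = 1` if `r = 0`, `γ_r = r − r₋` otherwise. -/
def gamma (r : K) : K := if r = 0 then 1 else r - rminus π 𝒯 r

open Classical in
/-- The wavelet coefficients `b_r(f)` of a continuous function. -/
def b0 (f : K → K) (r : K) : K := if r = 0 then f 0 else f r - f (rminus π 𝒯 r)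

/-- `c` is the coefficient family of the expansion of `f` with respect to the wavelet
basis `{γ_r^(n−j) (x − r)^j χ_r(x) : r ∈ ℛ, 0 ≤ j ≤ n}` of `Cⁿ(R, K)`. -/
def IsExpansion (n : ℕ) (f : K → K) (c : K → ℕ → K) : Prop :=
  ∀ x ∈ Rint K, HasSum
    (fun p : RR π 𝒯 × Fin (n + 1) =>
      c ↑p.1 ↑p.2 * gamma π 𝒯 ↑p.1 ^ (n - (p.2 : ℕ)) * (x - ↑p.1) ^ (p.2 : ℕ) *
        chi π 𝒯 ↑p.1 x)
    (f x)

/-- The coefficients `b_r^{n,j}(f)` of the expansion of `f ∈ Cⁿ(R,K)`. -/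
def bcoef (n : ℕ) (f : K → K) : K → ℕ → K := Classical.epsilon (IsExpansion π 𝒯 n f)

/-- The norm `|f|_n` on `Cⁿ(R, K)`, with values in `ℝ≥0∞`; `|f|_0` is the sup norm and
`|f|_(n+1) = sup_{r ∈ ℛ} max_{0 ≤ j ≤ n} |b_r^{n,j}(f) γ_r⁻¹|`. -/
def CnNorm : ℕ → (K → K) → ℝ≥0∞
  | 0, f => ⨆ x : Rint K, (‖f ↑x‖₊ : ℝ≥0∞)
  | n + 1, f =>
      ⨆ r : RR π 𝒯, ⨆ j : Fin (n + 1),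
        (‖bcoef π 𝒯 n f ↑r ↑j * (gamma π 𝒯 ↑r)⁻¹‖₊ : ℝ≥0∞)

/-- `K` is a local field with uniformizer `π`, residue field of cardinality `q`, and
set of residue representatives `𝒯` (containing `0`). -/
structure LocalFieldData (π : K) (𝒯 : Set K) (q : ℕ) : Prop where
  one_lt_q : 1 < q
  norm_pi : ‖π‖ = (q : ℝ)⁻¹
  norm_discrete : ∀ x : K, x ≠ 0 → ∃ n : ℤ, ‖x‖ = ‖π‖ ^ n
  rep_subset : 𝒯 ⊆ Rint K
  zero_mem : (0 : K) ∈ 𝒯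
  finite_rep : 𝒯.Finite
  card_rep : Nat.card 𝒯 = q
  rep_unique : ∀ x : K, ‖x‖ ≤ 1 → ∃! t, t ∈ 𝒯 ∧ ‖x - t‖ < 1


/-- The norm `|f|₁ = sup_{r ∈ ℛ} |b_r(f) γ_r⁻¹|` on `C¹(R, K)`. -/
def wnorm1 (f : K → K) : ℝ≥0∞ :=
  ⨆ r : RR π 𝒯, (‖b0 π 𝒯 f ↑r * (gamma π 𝒯 ↑r)⁻¹‖₊ : ℝ≥0∞)

/-- The `Cⁿ`-antiderivation `Pₙ f (x) = ∑_{j<n} ∑_m f⁽ʲ⁾(x_m)/(j+1)! (x_{m+1} − x_m)^(j+1)`. -/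
def Pn (n : ℕ) (f : K → K) (x : K) : K :=
  ∑ j ∈ Finset.range n, ∑' m : ℕ,
    iteratedDeriv j f (trunc π 𝒯 x m) / (((j + 1).factorial : ℕ) : K) *
      (trunc π 𝒯 x (m + 1) - trunc π 𝒯 x m) ^ (j + 1)

/-- `Pₙ ∘ Pₙ₋₁ ∘ ⋯ ∘ P₁`. -/
def Tnaux : ℕ → (K → K) → K → K
  | 0, f => f
  | n + 1, f => Pn π 𝒯 (n + 1) (Tnaux n f)

/-!
For `f ∈ C¹` the wavelet coefficients are values of the difference quotient,
`b_r(f) γ_r⁻¹ = Φ₁ f (r, r₋)`, so `|f|₁` is bounded by the continuous extension of `Φ₁ f` on the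
compact set `R × R`. Conversely, `f(x) - f(x_m)` telescopes along the truncations `x_M → x` into
terms `b_r(f) γ_r⁻¹ · γ_r` with `r = x_{M+1}` and `|γ_r| ≤ |π|^M`, so by the ultrametric
inequality `|f|₁` bounds both `sup_R |f|` and the Lipschitz constant of `f` on `R`. A
`|·|₁`-Cauchy sequence therefore converges uniformly together with its difference quotients; the
extensions converge uniformly on `R × R` because the diagonal lies in the closure of its
complement, so the limit `g` is `C¹`, and `|F_m - g|₁ → 0` because each coefficient passes to
pointwise limits. A vanishing derivative survives: the derivative of `F_m - g` is bounded by its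
Lipschitz constant `|F_m - g|₁`.
-/

section DifferenceQuotients

omit [CompleteSpace K] [IsUltrametricDist K]

lemma Rint_eq_closedBall : Rint K = Metric.closedBall 0 1 := by
  ext x
  simp [Rint]

lemma Phi_one (f : K → K) (x : Fin 2 → K) : Phi f 1 x = (f (x 0) - f (x 1)) / (x 0 - x 1) := by
  simp [Phi]

lemma Phi_sub (f g : K → K) :
    ∀ (n : ℕ) (x : Fin (n + 1) → K), Phi (f - g) n x = Phi f n x - Phi g n x
  | 0, _ => rfl
  | n + 1, x => by
    simp only [Phi, Phi_sub f g n]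
    ring

lemma IsCn.sub {f g : K → K} {n : ℕ} (hf : IsCn f n) (hg : IsCn g n) : IsCn (f - g) n := by
  obtain ⟨φ, hφ, hφf⟩ := hf
  obtain ⟨ψ, hψ, hψg⟩ := hg
  exact ⟨φ - ψ, hφ.sub hψ, fun x hx hinj => by simp [Phi_sub, hφf x hx hinj, hψg x hx hinj]⟩

lemma isCn_one_iff {f : K → K} :
    IsCn f 1 ↔ ∃ φ : (Fin 2 → K) → K, ContinuousOn φ {x | ∀ i, ‖x i‖ ≤ 1} ∧
      ∀ x y : K, ‖x‖ ≤ 1 → ‖y‖ ≤ 1 → f x - f y = φ ![x, y] * (x - y) := by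
  refine exists_congr fun φ => and_congr_right fun _ =>
    ⟨fun h x y hx hy => ?_, fun h x hx hinj => ?_⟩
  · rcases eq_or_ne x y with rfl | hxy
    · simp
    have hinj : Function.Injective ![x, y] := by
      intro i j
      fin_cases i <;> fin_cases j <;> simp [hxy, hxy.symm]
    rw [h _ (Fin.forall_fin_two.mpr ⟨hx, hy⟩) hinj, Phi_one]
    simp [div_mul_cancel₀ _ (sub_ne_zero.mpr hxy)]
  · have hx01 : x 0 - x 1 ≠ 0 := sub_ne_zero.mpr fun h01 => zero_ne_one (hinj h01)
    have hxv : ![x 0, x 1] = x := by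
      ext i
      fin_cases i <;> rfl
    rw [Phi_one, h _ _ (hx 0) (hx 1), hxv, mul_div_cancel_right₀ _ hx01]

lemma _root_.ContinuousOn.comp_vecCons_const {φ : (Fin 2 → K) → K}
    (hφ : ContinuousOn φ {x | ∀ i, ‖x i‖ ≤ 1}) {a : K} (ha : ‖a‖ ≤ 1) :
    ContinuousOn (fun y => φ ![y, a]) (Rint K) :=
  hφ.comp (by fun_prop) fun _ hy => Fin.forall_fin_two.mpr ⟨hy, ha⟩

lemma IsCn.continuousOn {f : K → K} (hf : IsCn f 1) : ContinuousOn f (Rint K) := by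
  obtain ⟨φ, hφ, hφf⟩ := isCn_one_iff.mp hf
  intro a ha
  have hcont : ContinuousWithinAt (fun y => f a + φ ![y, a] * (y - a)) (Rint K) a :=
    continuousWithinAt_const.add
      ((hφ.comp_vecCons_const ha a ha).mul (continuousWithinAt_id.sub continuousWithinAt_const))
  exact hcont.congr (fun y hy => by rw [← hφf y a hy ha]; ring) (by simp)

end DifferenceQuotients

section Digits

omit [CompleteSpace K] [IsUltrametricDist K]

namespace LocalFieldData

variable {π : K} {𝒯 : Set K} {q : ℕ} (hK : LocalFieldData π 𝒯 q)
include hK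

lemma norm_pi_pos : 0 < ‖π‖ := by
  have : (0 : ℝ) < q := by exact_mod_cast zero_lt_one.trans hK.one_lt_q
  rw [hK.norm_pi]
  positivity

lemma norm_pi_lt_one : ‖π‖ < 1 := by
  rw [hK.norm_pi]
  exact inv_lt_one_of_one_lt₀ (by exact_mod_cast hK.one_lt_q)

lemma norm_rep_le_one {t : K} (ht : t ∈ 𝒯) : ‖t‖ ≤ 1 := hK.rep_subset ht

lemma exists_norm_eq_pow {x : K} (hx0 : x ≠ 0) (hx : ‖x‖ ≤ 1) : ∃ m : ℕ, ‖x‖ = ‖π‖ ^ m := by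
  obtain ⟨n, hn⟩ := hK.norm_discrete x hx0
  have hn0 : 0 ≤ n :=
    (zpow_le_one_iff_right_of_lt_one₀ hK.norm_pi_pos hK.norm_pi_lt_one).mp (hn ▸ hx)
  exact ⟨n.toNat, by rw [hn, ← zpow_natCast, Int.toNat_of_nonneg hn0]⟩

lemma norm_le_norm_pi_of_lt_one {x : K} (hx : ‖x‖ < 1) : ‖x‖ ≤ ‖π‖ := by
  rcases eq_or_ne x 0 with rfl | hx0
  · simp [hK.norm_pi_pos.le]
  obtain ⟨m, hm⟩ := hK.exists_norm_eq_pow hx0 hx.le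
  have hm0 : m ≠ 0 := by
    rintro rfl
    simp [hm] at hx
  rw [hm]
  simpa using pow_le_pow_of_le_one hK.norm_pi_pos.le hK.norm_pi_lt_one.le
    (Nat.one_le_iff_ne_zero.mpr hm0)

end LocalFieldData

variable {π : K} {𝒯 : Set K}

lemma Rm_zero : Rm π 𝒯 0 = {0} := by
  ext x
  simp [Rm]

lemma mem_Rm_succ_iff {m : ℕ} {x : K} :
    x ∈ Rm π 𝒯 (m + 1) ↔ ∃ y ∈ Rm π 𝒯 m, ∃ t ∈ 𝒯, x = y + t * π ^ m := by
  constructor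
  · rintro ⟨a, ha, rfl⟩
    refine ⟨_, ⟨Fin.init a, fun i => ha _, rfl⟩, a (Fin.last m), ha _, ?_⟩
    simp [Fin.sum_univ_castSucc, Fin.init]
  · rintro ⟨y, ⟨a, ha, rfl⟩, t, ht, rfl⟩
    refine ⟨Fin.snoc a t, Fin.lastCases (by simpa using ht) (by simpa using ha), ?_⟩
    simp [Fin.sum_univ_castSucc]

lemma mem_Rm_len {r : K} (hr : r ∈ RR π 𝒯) : r ∈ Rm π 𝒯 (len π 𝒯 r) :=
  Nat.sInf_mem (Set.mem_iUnion.mp hr)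

lemma len_le {r : K} {m : ℕ} (h : r ∈ Rm π 𝒯 m) : len π 𝒯 r ≤ m := Nat.sInf_le h

lemma zero_mem_RR : (0 : K) ∈ RR π 𝒯 := Set.mem_iUnion.mpr ⟨0, by simp [Rm_zero]⟩

lemma wnorm1_le_ofReal_iff {f : K → K} {W : ℝ} (hW : 0 ≤ W) :
    wnorm1 π 𝒯 f ≤ ENNReal.ofReal W ↔ ∀ r ∈ RR π 𝒯, ‖b0 π 𝒯 f r * (gamma π 𝒯 r)⁻¹‖ ≤ W := by
  simp only [wnorm1, iSup_le_iff, Subtype.forall, ← enorm_eq_nnnorm, ← ofReal_norm,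
    ENNReal.ofReal_le_ofReal_iff hW]

lemma b0_zero_mul_gamma_inv (f : K → K) : b0 π 𝒯 f 0 * (gamma π 𝒯 0)⁻¹ = f 0 := by
  simp [b0, gamma]

variable {q : ℕ} (hK : LocalFieldData π 𝒯 q)
include hK

lemma Rm_mono : Monotone (Rm π 𝒯) :=
  monotone_nat_of_le_succ fun m x hx =>
    mem_Rm_succ_iff.mpr ⟨x, hx, 0, hK.zero_mem, by simp⟩

lemma zero_mem_Rm (m : ℕ) : (0 : K) ∈ Rm π 𝒯 m :=
  Rm_mono hK (Nat.zero_le m) (by simp [Rm_zero])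

lemma Rm_finite (m : ℕ) : (Rm π 𝒯 m).Finite := by
  have : Rm π 𝒯 m = (fun a : Fin m → K => ∑ i, a i * π ^ (i : ℕ)) '' Set.univ.pi fun _ => 𝒯 := by
    ext x
    simp [Rm, eq_comm]
  rw [this]
  exact (Set.Finite.pi fun _ => hK.finite_rep).image _

lemma exists_mem_Rm_norm_sub_le {x : K} (hx : ‖x‖ ≤ 1) :
    ∀ m : ℕ, ∃ s ∈ Rm π 𝒯 m, ‖x - s‖ ≤ ‖π‖ ^ m
  | 0 => ⟨0, zero_mem_Rm hK 0, by simpa using hx⟩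
  | m + 1 => by
    obtain ⟨s, hs, hxs⟩ := exists_mem_Rm_norm_sub_le hx m
    have hπm : 0 < ‖π‖ ^ m := pow_pos hK.norm_pi_pos m
    have hπm' : π ^ m ≠ 0 := pow_ne_zero m (norm_pos_iff.mp hK.norm_pi_pos)
    have hy : ‖(x - s) / π ^ m‖ ≤ 1 := by
      rwa [norm_div, norm_pow, div_le_one hπm]
    obtain ⟨t, ⟨ht, hyt⟩, -⟩ := hK.rep_unique _ hy
    refine ⟨s + t * π ^ m, mem_Rm_succ_iff.mpr ⟨s, hs, t, ht, rfl⟩, ?_⟩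
    have hxe : x - (s + t * π ^ m) = ((x - s) / π ^ m - t) * π ^ m := by
      field_simp
      ring
    rw [hxe, norm_mul, norm_pow, pow_succ']
    exact mul_le_mul_of_nonneg_right (hK.norm_le_norm_pi_of_lt_one hyt) hπm.le

lemma trunc_mem_Rm {x : K} (hx : ‖x‖ ≤ 1) (m : ℕ) : trunc π 𝒯 x m ∈ Rm π 𝒯 m :=
  (Classical.epsilon_spec (exists_mem_Rm_norm_sub_le hK hx m)).1

lemma norm_sub_trunc_le {x : K} (hx : ‖x‖ ≤ 1) (m : ℕ) : ‖x - trunc π 𝒯 x m‖ ≤ ‖π‖ ^ m :=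
  (Classical.epsilon_spec (exists_mem_Rm_norm_sub_le hK hx m)).2

lemma trunc_zero {x : K} (hx : ‖x‖ ≤ 1) : trunc π 𝒯 x 0 = 0 := by
  simpa [Rm_zero] using trunc_mem_Rm hK hx 0

lemma tendsto_trunc {x : K} (hx : ‖x‖ ≤ 1) : Tendsto (trunc π 𝒯 x) atTop (𝓝 x) := by
  rw [tendsto_iff_norm_sub_tendsto_zero]
  refine squeeze_zero (fun _ => norm_nonneg _) (fun m => ?_)
    (tendsto_pow_atTop_nhds_zero_of_lt_one hK.norm_pi_pos.le hK.norm_pi_lt_one)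
  rw [norm_sub_rev]
  exact norm_sub_trunc_le hK hx m

end Digits

section Truncation

omit [CompleteSpace K]

lemma norm_sub_le_max_norm_sub (a b c : K) : ‖a - c‖ ≤ max ‖a - b‖ ‖b - c‖ := by
  simpa only [dist_eq_norm] using IsUltrametricDist.dist_triangle_max a b c

lemma Rint_mem_nhds {a : K} (ha : a ∈ Rint K) : Rint K ∈ 𝓝 a := by
  rw [Rint_eq_closedBall] at ha ⊢
  exact (IsUltrametricDist.isOpen_closedBall 0 one_ne_zero).mem_nhds ha

variable {π : K} {𝒯 : Set K} {q : ℕ} (hK : LocalFieldData π 𝒯 q)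
include hK

lemma Rm_subset_Rint (m : ℕ) : Rm π 𝒯 m ⊆ Rint K := by
  rintro x ⟨a, ha, rfl⟩
  refine IsUltrametricDist.norm_sum_le_of_forall_le_of_nonneg zero_le_one fun i _ => ?_
  rw [norm_mul, norm_pow]
  exact mul_le_one₀ (hK.norm_rep_le_one (ha i)) (by positivity)
    (pow_le_one₀ (norm_nonneg _) hK.norm_pi_lt_one.le)

/-- Peel off the top digit: the lower parts agree by induction, then the top digits agree
modulo `π`. -/
lemma eq_of_mem_Rm_of_norm_sub_le :
    ∀ {m : ℕ} {s s' : K}, s ∈ Rm π 𝒯 m → s' ∈ Rm π 𝒯 m → ‖s - s'‖ ≤ ‖π‖ ^ m → s = s'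
  | 0, s, s', hs, hs', _ => by simp_all [Rm_zero]
  | m + 1, s, s', hs, hs', hss' => by
    obtain ⟨y, hy, t, ht, rfl⟩ := mem_Rm_succ_iff.mp hs
    obtain ⟨y', hy', t', ht', rfl⟩ := mem_Rm_succ_iff.mp hs'
    have hπ0 := hK.norm_pi_pos
    have htt' : ‖t - t'‖ ≤ 1 := (norm_sub_le_max_norm_sub t 0 t').trans
      (by simpa using max_le (hK.norm_rep_le_one ht) (hK.norm_rep_le_one ht'))
    have hyy' : y = y' := by
      refine eq_of_mem_Rm_of_norm_sub_le hy hy' ?_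
      have hdigit : ‖(t' - t) * π ^ m‖ ≤ ‖π‖ ^ m := by
        simpa [norm_mul, norm_sub_rev] using mul_le_mul_of_nonneg_right htt' (pow_nonneg hπ0.le m)
      calc ‖y - y'‖ = ‖(y + t * π ^ m - (y' + t' * π ^ m)) + (t' - t) * π ^ m‖ := by ring_nf
        _ ≤ ‖π‖ ^ m := (IsUltrametricDist.norm_add_le_max _ _).trans <| max_le
            (hss'.trans (pow_le_pow_of_le_one hπ0.le hK.norm_pi_lt_one.le (by omega))) hdigit
    subst hyy'
    have htt'π : ‖t - t'‖ ≤ ‖π‖ := by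
      have : ‖t - t'‖ * ‖π‖ ^ m ≤ ‖π‖ * ‖π‖ ^ m := by
        simpa [← norm_pow, ← norm_mul, pow_succ', sub_mul] using hss'
      exact le_of_mul_le_mul_right this (pow_pos hπ0 m)
    obtain ⟨u, -, hu⟩ := hK.rep_unique t (hK.norm_rep_le_one ht)
    rw [hu t ⟨ht, by simp⟩, hu t' ⟨ht', htt'π.trans_lt hK.norm_pi_lt_one⟩]

lemma norm_trunc_le_one {x : K} (hx : ‖x‖ ≤ 1) (m : ℕ) : ‖trunc π 𝒯 x m‖ ≤ 1 :=
  Rm_subset_Rint hK m (trunc_mem_Rm hK hx m)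

lemma trunc_eq_of_norm_sub_le {x s : K} {m : ℕ} (hx : ‖x‖ ≤ 1) (hs : s ∈ Rm π 𝒯 m)
    (h : ‖x - s‖ ≤ ‖π‖ ^ m) : trunc π 𝒯 x m = s :=
  eq_of_mem_Rm_of_norm_sub_le hK (trunc_mem_Rm hK hx m) hs <|
    (norm_sub_le_max_norm_sub _ x _).trans
      (max_le (by rw [norm_sub_rev]; exact norm_sub_trunc_le hK hx m) h)

lemma trunc_eq_trunc_of_norm_sub_le {x y : K} {m : ℕ} (hx : ‖x‖ ≤ 1) (hy : ‖y‖ ≤ 1)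
    (h : ‖x - y‖ ≤ ‖π‖ ^ m) : trunc π 𝒯 y m = trunc π 𝒯 x m :=
  trunc_eq_of_norm_sub_le hK hy (trunc_mem_Rm hK hx m) <|
    (norm_sub_le_max_norm_sub _ x _).trans
      (max_le (by rwa [norm_sub_rev]) (norm_sub_trunc_le hK hx m))

lemma norm_le_one_of_mem_RR {r : K} (hr : r ∈ RR π 𝒯) : ‖r‖ ≤ 1 :=
  Rm_subset_Rint hK _ (mem_Rm_len hr)

lemma rminus_ne_self {r : K} (hr : r ∈ RR π 𝒯) (h0 : r ≠ 0) : rminus π 𝒯 r ≠ r := by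
  intro h
  have hmem := trunc_mem_Rm hK (norm_le_one_of_mem_RR hK hr) (len π 𝒯 r - 1)
  rw [← rminus, h] at hmem
  have hlen : len π 𝒯 r = 0 := by
    have := len_le hmem
    omega
  have hr0 := mem_Rm_len hr
  rw [hlen, Rm_zero] at hr0
  exact h0 hr0

lemma norm_rminus_le_one {r : K} (hr : r ∈ RR π 𝒯) : ‖rminus π 𝒯 r‖ ≤ 1 :=
  norm_trunc_le_one hK (norm_le_one_of_mem_RR hK hr) _

lemma rminus_trunc_succ {x : K} (hx : ‖x‖ ≤ 1) {M : ℕ}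
    (h : trunc π 𝒯 x (M + 1) ≠ trunc π 𝒯 x M) :
    trunc π 𝒯 x (M + 1) ∈ RR π 𝒯 ∧ trunc π 𝒯 x (M + 1) ≠ 0 ∧
      rminus π 𝒯 (trunc π 𝒯 x (M + 1)) = trunc π 𝒯 x M := by
  set r := trunc π 𝒯 x (M + 1)
  have hrRm : r ∈ Rm π 𝒯 (M + 1) := trunc_mem_Rm hK hx (M + 1)
  have hxr : ‖x - r‖ ≤ ‖π‖ ^ M := (norm_sub_trunc_le hK hx (M + 1)).trans
    (pow_le_pow_of_le_one hK.norm_pi_pos.le hK.norm_pi_lt_one.le M.le_succ)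
  have hr_notMem : r ∉ Rm π 𝒯 M := fun hrM => h (trunc_eq_of_norm_sub_le hK hx hrM hxr).symm
  have hlen : len π 𝒯 r = M + 1 := by
    refine le_antisymm (len_le hrRm) (Nat.succ_le_of_lt (lt_of_not_ge fun hle => ?_))
    exact hr_notMem (Rm_mono hK hle (mem_Rm_len (Set.mem_iUnion.mpr ⟨_, hrRm⟩)))
  refine ⟨Set.mem_iUnion.mpr ⟨_, hrRm⟩, fun h0 => hr_notMem (h0 ▸ zero_mem_Rm hK M), ?_⟩
  rw [rminus, hlen, Nat.add_sub_cancel]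
  exact trunc_eq_trunc_of_norm_sub_le hK hx (Rm_subset_Rint hK _ hrRm) hxr

end Truncation

section Compactness

omit [IsUltrametricDist K]

variable {π : K} {𝒯 : Set K} {q : ℕ}

lemma isCompact_Rint (hK : LocalFieldData π 𝒯 q) : IsCompact (Rint K) := by
  refine TotallyBounded.isCompact_of_isClosed (Metric.totallyBounded_iff.mpr fun ε hε => ?_)
    (isClosed_le continuous_norm continuous_const)
  obtain ⟨m, hm⟩ := exists_pow_lt_of_lt_one hε hK.norm_pi_lt_one
  refine ⟨Rm π 𝒯 m, Rm_finite hK m, fun x (hx : ‖x‖ ≤ 1) => Set.mem_biUnion (trunc_mem_Rm hK hx m) ?_⟩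
  rw [Metric.mem_ball, dist_eq_norm]
  exact (norm_sub_trunc_le hK hx m).trans_lt hm

lemma isCompact_Rint_pi (hK : LocalFieldData π 𝒯 q) (n : ℕ) :
    IsCompact {x : Fin n → K | ∀ i, ‖x i‖ ≤ 1} := by
  simpa [Set.pi, Rint] using isCompact_univ_pi fun _ : Fin n => isCompact_Rint hK

end Compactness

section Diagonal

omit [CompleteSpace K]

lemma IsCn.exists_hasDerivAt {f : K → K} (hf : IsCn f 1) {a : K} (ha : ‖a‖ ≤ 1) :
    ∃ d, HasDerivAt f d a := by
  obtain ⟨φ, hφ, hφf⟩ := isCn_one_iff.mp hf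
  refine ⟨φ ![a, a], hasDerivAt_iff_tendsto_slope.mpr ?_⟩
  have hcont : ContinuousAt (fun y => φ ![y, a]) a :=
    (hφ.comp_vecCons_const ha).continuousAt (Rint_mem_nhds ha)
  refine (hcont.tendsto.mono_left nhdsWithin_le_nhds).congr' ?_
  filter_upwards [self_mem_nhdsWithin, nhdsWithin_le_nhds (Rint_mem_nhds ha)] with y hya hy
  rw [slope_def_field, hφf y a hy ha, mul_div_cancel_right₀ _ (sub_ne_zero.mpr hya)]

/-- `(x + t, x) → (x, x)` as `t → 0` with `t ≠ 0`. -/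
lemma norm_le_of_forall_ne {ψ : (Fin 2 → K) → K} {c : ℝ}
    (hψ : ContinuousOn ψ {x | ∀ i, ‖x i‖ ≤ 1})
    (h : ∀ x y : K, ‖x‖ ≤ 1 → ‖y‖ ≤ 1 → x ≠ y → ‖ψ ![x, y]‖ ≤ c)
    {x y : K} (hx : ‖x‖ ≤ 1) (hy : ‖y‖ ≤ 1) : ‖ψ ![x, y]‖ ≤ c := by
  rcases ne_or_eq x y with hxy | rfl
  · exact h x y hx hy hxy
  have hmem : ∀ᶠ t in 𝓝[≠] (0 : K), ‖x + t‖ ≤ 1 ∧ x + t ≠ x := by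
    filter_upwards [self_mem_nhdsWithin, nhdsWithin_le_nhds (Metric.closedBall_mem_nhds 0 one_pos)]
      with t ht0 ht1
    refine ⟨(IsUltrametricDist.norm_add_le_max _ _).trans (max_le hx ?_), by simpa using ht0⟩
    simpa using ht1
  have hlim : Tendsto (fun t => ![x + t, x]) (𝓝[≠] 0) (𝓝[{x | ∀ i, ‖x i‖ ≤ 1}] ![x, x]) := by
    refine tendsto_nhdsWithin_iff.mpr ⟨?_, hmem.mono fun t ht => Fin.forall_fin_two.mpr ⟨ht.1, hx⟩⟩
    have : Continuous fun t : K => ![x + t, x] := by fun_prop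
    simpa using (this.tendsto 0).mono_left nhdsWithin_le_nhds
  exact le_of_tendsto ((hψ _ (Fin.forall_fin_two.mpr ⟨hx, hx⟩)).tendsto.comp hlim).norm
    (hmem.mono fun t ht => h _ _ ht.1 hx ht.2)

end Diagonal

section WaveletCoefficients

omit [CompleteSpace K]

variable {π : K} {𝒯 : Set K} {q : ℕ} (hK : LocalFieldData π 𝒯 q)
include hK

/-- `f(x_{M+1}) - f(x_M) = b_r(f) γ_r⁻¹ · γ_r` for `r = x_{M+1}`. -/
lemma norm_sub_trunc_succ_le {f : K → K} {W : ℝ}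
    (hW : ∀ r ∈ RR π 𝒯, ‖b0 π 𝒯 f r * (gamma π 𝒯 r)⁻¹‖ ≤ W) {x : K} (hx : ‖x‖ ≤ 1) (M : ℕ) :
    ‖f (trunc π 𝒯 x (M + 1)) - f (trunc π 𝒯 x M)‖ ≤ W * ‖π‖ ^ M := by
  have hW0 : 0 ≤ W := (norm_nonneg _).trans (hW 0 zero_mem_RR)
  by_cases h : trunc π 𝒯 x (M + 1) = trunc π 𝒯 x M
  · rw [h, sub_self, norm_zero]
    exact mul_nonneg hW0 (pow_nonneg (norm_nonneg _) M)
  obtain ⟨hrR, hr0, hrm⟩ := rminus_trunc_succ hK hx h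
  set r := trunc π 𝒯 x (M + 1)
  have hγ : gamma π 𝒯 r = r - trunc π 𝒯 x M := by rw [gamma, if_neg hr0, hrm]
  have hb : f r - f (trunc π 𝒯 x M) = b0 π 𝒯 f r * (gamma π 𝒯 r)⁻¹ * gamma π 𝒯 r := by
    rw [inv_mul_cancel_right₀ (by rw [hγ]; exact sub_ne_zero.mpr h), b0, if_neg hr0, hrm]
  rw [hb, norm_mul]
  refine mul_le_mul (hW r hrR) ?_ (norm_nonneg _) hW0
  rw [hγ]
  refine (norm_sub_le_max_norm_sub r x _).trans (max_le ?_ (norm_sub_trunc_le hK hx M))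
  rw [norm_sub_rev]
  exact (norm_sub_trunc_le hK hx (M + 1)).trans
    (pow_le_pow_of_le_one hK.norm_pi_pos.le hK.norm_pi_lt_one.le M.le_succ)

lemma norm_sub_trunc_le_of_coeff {f : K → K} (hf : ContinuousOn f (Rint K)) {W : ℝ}
    (hW : ∀ r ∈ RR π 𝒯, ‖b0 π 𝒯 f r * (gamma π 𝒯 r)⁻¹‖ ≤ W) {x : K} (hx : ‖x‖ ≤ 1) (m : ℕ) :
    ‖f x - f (trunc π 𝒯 x m)‖ ≤ W * ‖π‖ ^ m := by
  have hW0 : 0 ≤ W := (norm_nonneg _).trans (hW 0 zero_mem_RR)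
  have hchain : ∀ M ≥ m, ‖f (trunc π 𝒯 x M) - f (trunc π 𝒯 x m)‖ ≤ W * ‖π‖ ^ m := by
    intro M hM
    rw [← Finset.sum_Ico_sub (fun i => f (trunc π 𝒯 x i)) hM]
    refine IsUltrametricDist.norm_sum_le_of_forall_le_of_nonneg
      (mul_nonneg hW0 (pow_nonneg (norm_nonneg _) m)) fun i hi => ?_
    exact (norm_sub_trunc_succ_le hK hW hx i).trans <| mul_le_mul_of_nonneg_left
      (pow_le_pow_of_le_one hK.norm_pi_pos.le hK.norm_pi_lt_one.le (Finset.mem_Ico.mp hi).1) hW0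
  have htrunc : Tendsto (trunc π 𝒯 x) atTop (𝓝[Rint K] x) :=
    tendsto_nhdsWithin_iff.mpr ⟨tendsto_trunc hK hx, .of_forall (norm_trunc_le_one hK hx)⟩
  have hlim := (((hf x hx).tendsto.comp htrunc).sub_const (f (trunc π 𝒯 x m))).norm
  exact le_of_tendsto hlim (eventually_atTop.mpr ⟨m, hchain⟩)

lemma norm_sub_le_of_wnorm1_le {f : K → K} (hf : ContinuousOn f (Rint K)) {W : ℝ} (hW : 0 ≤ W)
    (h : wnorm1 π 𝒯 f ≤ ENNReal.ofReal W) {x y : K} (hx : ‖x‖ ≤ 1) (hy : ‖y‖ ≤ 1) :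
    ‖f x - f y‖ ≤ W * ‖x - y‖ := by
  have hcoeff := (wnorm1_le_ofReal_iff hW).mp h
  rcases eq_or_ne x y with rfl | hxy
  · simp
  obtain ⟨m, hm⟩ := hK.exists_norm_eq_pow (sub_ne_zero.mpr hxy)
    ((norm_sub_le_max_norm_sub x 0 y).trans (by simpa using max_le hx hy))
  have htr := trunc_eq_trunc_of_norm_sub_le hK hx hy hm.le
  rw [hm]
  refine (norm_sub_le_max_norm_sub _ (f (trunc π 𝒯 x m)) _).trans
    (max_le (norm_sub_trunc_le_of_coeff hK hf hcoeff hx m) ?_)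
  rw [norm_sub_rev, ← htr]
  exact norm_sub_trunc_le_of_coeff hK hf hcoeff hy m

lemma norm_le_of_wnorm1_le {f : K → K} (hf : ContinuousOn f (Rint K)) {W : ℝ} (hW : 0 ≤ W)
    (h : wnorm1 π 𝒯 f ≤ ENNReal.ofReal W) {x : K} (hx : ‖x‖ ≤ 1) : ‖f x‖ ≤ W := by
  have hcoeff := (wnorm1_le_ofReal_iff hW).mp h
  have h0 : ‖f 0‖ ≤ W := b0_zero_mul_gamma_inv (π := π) (𝒯 := 𝒯) f ▸ hcoeff 0 zero_mem_RR
  have hx0 := norm_sub_trunc_le_of_coeff hK hf hcoeff hx 0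
  rw [trunc_zero hK hx, pow_zero, mul_one] at hx0
  simpa using (IsUltrametricDist.norm_add_le_max (f x - f 0) (f 0)).trans (max_le hx0 h0)

lemma wnorm1_le_of_tendsto {G : ℕ → K → K} {g : K → K}
    (hG : ∀ x, ‖x‖ ≤ 1 → Tendsto (fun l => G l x) atTop (𝓝 (g x))) {c : ℝ≥0∞}
    (h : ∀ᶠ l in atTop, wnorm1 π 𝒯 (G l) ≤ c) : wnorm1 π 𝒯 g ≤ c := by
  refine iSup_le fun ⟨r, hr⟩ => ?_
  have hcoeff : Tendsto (fun l => b0 π 𝒯 (G l) r * (gamma π 𝒯 r)⁻¹) atTop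
      (𝓝 (b0 π 𝒯 g r * (gamma π 𝒯 r)⁻¹)) := by
    refine Tendsto.mul_const _ ?_
    rcases eq_or_ne r 0 with rfl | hr0
    · simpa [b0] using hG 0 (by simp)
    · simpa [b0, hr0] using
        (hG r (norm_le_one_of_mem_RR hK hr)).sub (hG _ (norm_rminus_le_one hK hr))
  refine le_of_tendsto hcoeff.enorm (h.mono fun l hl => ?_)
  exact (le_iSup (fun r : RR π 𝒯 => (‖b0 π 𝒯 (G l) r * (gamma π 𝒯 r)⁻¹‖₊ : ℝ≥0∞))
    ⟨r, hr⟩).trans hl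

lemma hasDerivWithinAt_zero_of_tendsto_wnorm1 {F : ℕ → K → K} {g : K → K}
    (hF : ∀ m, IsCn (F m) 1) (hg : IsCn g 1)
    (hlim : Tendsto (fun m => wnorm1 π 𝒯 (F m - g)) atTop (𝓝 0)) {a : K} (ha : a ∈ Rint K)
    (hFa : ∀ m, HasDerivWithinAt (F m) 0 (Rint K) a) : HasDerivWithinAt g 0 (Rint K) a := by
  obtain ⟨d, hd⟩ := hg.exists_hasDerivAt ha
  suffices d = 0 from this ▸ hd.hasDerivWithinAt
  refine norm_le_zero_iff.mp (le_of_forall_gt_imp_ge_of_dense fun e he => ?_)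
  obtain ⟨m, hm⟩ := (ENNReal.tendsto_nhds_zero.mp hlim _ (ENNReal.ofReal_pos.mpr he)).exists
  have hderiv : HasDerivAt (F m - g) (0 - d) a := ((hFa m).hasDerivAt (Rint_mem_nhds ha)).sub hd
  simpa using hderiv.le_of_lip' he.le <| Filter.mem_of_superset (Rint_mem_nhds ha) fun x hx =>
    norm_sub_le_of_wnorm1_le hK ((hF m).sub hg).continuousOn he.le hm hx ha

end WaveletCoefficients

section Completeness

lemma isCn_one_of_tendsto {F : ℕ → K → K} {g : K → K} (hF : ∀ m, IsCn (F m) 1)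
    (hg : ∀ x, ‖x‖ ≤ 1 → Tendsto (fun m => F m x) atTop (𝓝 (g x)))
    (hcau : ∀ e > 0, ∃ N, ∀ k ≥ N, ∀ l ≥ N, ∀ x y : K, ‖x‖ ≤ 1 → ‖y‖ ≤ 1 →
      ‖(F k - F l) x - (F k - F l) y‖ ≤ e * ‖x - y‖) :
    IsCn g 1 := by
  choose φ hφc hφ using fun m => isCn_one_iff.mp (hF m)
  have hunif : UniformCauchySeqOn φ atTop {x | ∀ i, ‖x i‖ ≤ 1} := by
    refine Metric.uniformCauchySeqOn_iff.mpr fun e he => ?_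
    obtain ⟨N, hN⟩ := hcau (e / 2) (half_pos he)
    refine ⟨N, fun k hk l hl z hz => ?_⟩
    have hoff : ∀ x y : K, ‖x‖ ≤ 1 → ‖y‖ ≤ 1 → x ≠ y → ‖(φ k - φ l) ![x, y]‖ ≤ e / 2 := by
      intro x y hx hy hxy
      have hquot : (F k - F l) x - (F k - F l) y = (φ k - φ l) ![x, y] * (x - y) := by
        simp only [Pi.sub_apply]
        rw [sub_sub_sub_comm, hφ k x y hx hy, hφ l x y hx hy, sub_mul]
      have := hN k hk l hl x y hx hy
      rw [hquot, norm_mul] at this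
      exact le_of_mul_le_mul_right this (norm_pos_iff.mpr (sub_ne_zero.mpr hxy))
    have hzv : ![z 0, z 1] = z := by
      ext i
      fin_cases i <;> rfl
    rw [dist_eq_norm, ← hzv]
    exact (norm_le_of_forall_ne ((hφc k).sub (hφc l)) hoff (hz 0) (hz 1)).trans_lt
      (half_lt_self he)
  have hφlim : TendstoUniformlyOn φ (fun z => limUnder atTop (φ · z)) atTop
      {x | ∀ i, ‖x i‖ ≤ 1} :=
    hunif.tendstoUniformlyOn_of_tendsto fun z hz => (hunif.cauchySeq hz).tendsto_limUnder
  refine isCn_one_iff.mpr ⟨_, hφlim.continuousOn (.of_forall hφc), fun x y hx hy => ?_⟩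
  refine tendsto_nhds_unique ((hg x hx).sub (hg y hy)) ?_
  simp_rw [hφ _ x y hx hy]
  exact (hφlim.tendsto_at (Fin.forall_fin_two.mpr ⟨hx, hy⟩)).mul_const _

variable {π : K} {𝒯 : Set K} {q : ℕ} (hK : LocalFieldData π 𝒯 q)
include hK

lemma wnorm1_lt_top {f : K → K} (hf : IsCn f 1) : wnorm1 π 𝒯 f < ⊤ := by
  obtain ⟨φ, hφ, hφf⟩ := isCn_one_iff.mp hf
  obtain ⟨C, hC⟩ := (isCompact_Rint_pi hK 2).exists_bound_of_continuousOn hφ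
  refine ((wnorm1_le_ofReal_iff (W := max C ‖f 0‖) (le_max_of_le_right (norm_nonneg _))).mpr
    fun r hr => ?_).trans_lt ENNReal.ofReal_lt_top
  rcases eq_or_ne r 0 with rfl | hr0
  · rw [b0_zero_mul_gamma_inv]
    exact le_max_right _ _
  have hr1 := norm_le_one_of_mem_RR hK hr
  have hr1' := norm_rminus_le_one hK hr
  rw [b0, gamma, if_neg hr0, if_neg hr0, hφf _ _ hr1 hr1',
    mul_inv_cancel_right₀ (sub_ne_zero.mpr (rminus_ne_self hK hr hr0).symm)]
  exact (hC _ (Fin.forall_fin_two.mpr ⟨hr1, hr1'⟩)).trans (le_max_left _ _)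

lemma exists_isCn_tendsto_wnorm1 {F : ℕ → K → K} (hF : ∀ m, IsCn (F m) 1)
    (hC : ∀ ε : ℝ≥0∞, 0 < ε → ∃ N : ℕ, ∀ k l : ℕ, N ≤ k → N ≤ l →
      wnorm1 π 𝒯 (F k - F l) < ε) :
    ∃ g : K → K, IsCn g 1 ∧ Tendsto (fun m => wnorm1 π 𝒯 (F m - g)) atTop (𝓝 0) := by
  have hsmall : ∀ e > 0, ∃ N, ∀ k ≥ N, ∀ l ≥ N,
      wnorm1 π 𝒯 (F k - F l) ≤ ENNReal.ofReal e := fun e he =>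
    (hC _ (ENNReal.ofReal_pos.mpr he)).imp fun N hN k hk l hl => (hN k l hk hl).le
  have hcauchy : ∀ x, ‖x‖ ≤ 1 → CauchySeq fun m => F m x := by
    refine fun x hx => Metric.cauchySeq_iff.mpr fun e he => ?_
    obtain ⟨N, hN⟩ := hsmall (e / 2) (half_pos he)
    refine ⟨N, fun k hk l hl => ?_⟩
    rw [dist_eq_norm]
    exact (norm_le_of_wnorm1_le hK ((hF k).sub (hF l)).continuousOn (half_pos he).le
      (hN k hk l hl) hx).trans_lt (half_lt_self he)
  set g : K → K := fun x => limUnder atTop fun m => F m x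
  have hg : ∀ x, ‖x‖ ≤ 1 → Tendsto (fun m => F m x) atTop (𝓝 (g x)) :=
    fun x hx => (hcauchy x hx).tendsto_limUnder
  refine ⟨g, isCn_one_of_tendsto hF hg fun e he => ?_, ENNReal.tendsto_nhds_zero.mpr fun ε hε => ?_⟩
  · obtain ⟨N, hN⟩ := hsmall e he
    exact ⟨N, fun k hk l hl x y hx hy => norm_sub_le_of_wnorm1_le hK
      ((hF k).sub (hF l)).continuousOn he.le (hN k hk l hl) hx hy⟩
  · obtain ⟨N, hN⟩ := hC ε hε
    filter_upwards [eventually_ge_atTop N] with m hm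
    exact wnorm1_le_of_tendsto hK (G := fun l => F m - F l)
      (fun x hx => tendsto_const_nhds.sub (hg x hx))
      (eventually_atTop.mpr ⟨N, fun l hl => (hN m l hm hl).le⟩)

end Completeness

/-- `C¹(R,K)` and `N¹(R,K)` are `K`-Banach spaces with respect to the norm
`|f|₁ = sup_{r ∈ ℛ} |b_r(f)γ_r⁻¹|`: the norm is finite on `C¹`, and every Cauchy sequence
in `C¹(R,K)` (resp. `N¹(R,K)`) converges in the `|·|₁`-norm to an element of the space. -/
theorem statement_9 (π : K) (𝒯 : Set K) (q : ℕ) (hK : LocalFieldData π 𝒯 q) :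
    (∀ f : K → K, IsCn f 1 → wnorm1 π 𝒯 f < ⊤) ∧
    (∀ F : ℕ → K → K, (∀ m, IsCn (F m) 1) →
      (∀ ε : ℝ≥0∞, 0 < ε → ∃ N : ℕ, ∀ k l : ℕ, N ≤ k → N ≤ l →
        wnorm1 π 𝒯 (F k - F l) < ε) →
      ∃ g : K → K, IsCn g 1 ∧
        Tendsto (fun m => wnorm1 π 𝒯 (F m - g)) atTop (𝓝 0)) ∧
    (∀ F : ℕ → K → K,
      (∀ m, IsCn (F m) 1 ∧ ∀ a ∈ Rint K, HasDerivWithinAt (F m) 0 (Rint K) a) →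
      (∀ ε : ℝ≥0∞, 0 < ε → ∃ N : ℕ, ∀ k l : ℕ, N ≤ k → N ≤ l →
        wnorm1 π 𝒯 (F k - F l) < ε) →
      ∃ g : K → K,
        (IsCn g 1 ∧ ∀ a ∈ Rint K, HasDerivWithinAt g 0 (Rint K) a) ∧
        Tendsto (fun m => wnorm1 π 𝒯 (F m - g)) atTop (𝓝 0)) := by
  refine ⟨fun f hf => wnorm1_lt_top hK hf, fun F hF hC => exists_isCn_tendsto_wnorm1 hK hF hC,
    fun F hF hC => ?_⟩
  obtain ⟨g, hg, hlim⟩ := exists_isCn_tendsto_wnorm1 hK (fun m => (hF m).1) hC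
  exact ⟨g, ⟨hg, fun a ha => hasDerivWithinAt_zero_of_tendsto_wnorm1 hK (fun m => (hF m).1) hg
    hlim ha fun m => (hF m).2 a ha⟩, hlim⟩

end DSW
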